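/- Let dμ and dν be bounded ℝ^k-valued measures on a measurable space X with dμ_ε := dμ + ε dν, decompositions dμ_ε = N_ε |dμ_ε|, dν = A_ε |dμ_ε| + dν_s^ε (dν_s^ε ⊥ |dμ_ε|), and F(ε) := ∫_X |dμ_ε|. Suppose |A_{ε₁}|² ∈ L¹(X, |dμ_{ε₁}|), where ε₁ ∈ ℝ is arbitrary. Then lim_{ε₂→ε₁+} (F'_±(ε₂) − F'_+(ε₁))/(ε₂ − ε₁) = lim_{ε₂→ε₁−} (F'_±(ε₂) − F'_−(ε₁))/(ε₂ − ε₁) = ∫_X ( |A_{ε₁}|² − |A_{ε₁}·N_{ε₁}|² ) |dμ_{ε₁}| (all four limits exist, have this common value, and the value is ≥ 0). -/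

import Mathlib

/-!
Write `ε = ε₁ + t`. Since `dμ_{ε₁+t} = (N_{ε₁} + t A_{ε₁}) |dμ_{ε₁}| + t dν_s^{ε₁}` with
`dν_s^{ε₁} ⊥ |dμ_{ε₁}|`, the total variation splits as
`F(ε₁ + t) = ∫ ‖N_{ε₁} + t A_{ε₁}‖ |dμ_{ε₁}| + |t| |dν_s^{ε₁}|(X)`.
Differentiating under the integral sign (difference quotients are dominated by `‖A_{ε₁}‖`), the
one-sided derivatives of the first term are the integrals of those of `u ↦ ‖n + u a‖`, which equal
`⟪n + t a, a⟫ / ‖n + t a‖` off the zero of `n + t a`, and `⟪n, a⟫` at `t = 0` when `‖n‖ = 1`.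
The `|t|` term adds the same constant to `F'_±(ε₂)` and to `F'_+(ε₁)` (for `ε₂ > ε₁`) or
`F'_-(ε₁)` (for `ε₂ < ε₁`), so it cancels in the difference quotients. What remains converges
pointwise to `‖a‖² - ⟪a, n⟫²`, the derivative at `0` of `t ↦ ⟪n + t a, a⟫ / ‖n + t a‖`, and is
dominated by `2 ‖a‖²`, which is integrable by hypothesis.
-/

open MeasureTheory Filter Set Topology
open scoped InnerProductSpace

section NormAlongLine

variable {E : Type*} [NormedAddCommGroup E] [InnerProductSpace ℝ E]

open scoped Classical in
/-- The right derivative at `0` of `u ↦ ‖v + u • a‖`. -/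
noncomputable def normRightDeriv (v a : E) : ℝ :=
  if v = 0 then ‖a‖ else ⟪v, a⟫_ℝ / ‖v‖

noncomputable def normLeftDeriv (v a : E) : ℝ :=
  -normRightDeriv v (-a)

theorem normRightDeriv_of_ne_zero {v : E} (hv : v ≠ 0) (a : E) :
    normRightDeriv v a = ⟪v, a⟫_ℝ / ‖v‖ :=
  if_neg hv

theorem normRightDeriv_of_norm_eq_one {v : E} (hv : ‖v‖ = 1) (a : E) :
    normRightDeriv v a = ⟪v, a⟫_ℝ := by
  rw [normRightDeriv_of_ne_zero (norm_ne_zero_iff.mp (by simp [hv])), hv, div_one]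

theorem normLeftDeriv_of_norm_eq_one {v : E} (hv : ‖v‖ = 1) (a : E) :
    normLeftDeriv v a = ⟪v, a⟫_ℝ := by
  simp [normLeftDeriv, normRightDeriv_of_norm_eq_one hv]

theorem abs_normRightDeriv_le (v a : E) : |normRightDeriv v a| ≤ ‖a‖ := by
  unfold normRightDeriv
  split_ifs with hv
  · exact (abs_norm a).le
  · rw [abs_div, abs_norm, div_le_iff₀ (norm_pos_iff.mpr hv), mul_comm]
    exact abs_real_inner_le_norm v a

theorem hasDerivAt_norm_add_smul (v a : E) {t : ℝ} (ht : v + t • a ≠ 0) :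
    HasDerivAt (fun u : ℝ => ‖v + u • a‖) (⟪v + t • a, a⟫_ℝ / ‖v + t • a‖) t := by
  have hline : HasDerivAt (fun u : ℝ => v + u • a) a t := by
    simpa using ((hasDerivAt_id t).smul_const a).const_add v
  have hsq := hline.norm_sq.sqrt (by positivity)
  simp only [Real.sqrt_sq (norm_nonneg _)] at hsq
  convert hsq using 1
  field_simp

theorem abs_slope_norm_add_smul_le (v a : E) (t u : ℝ) :
    |slope (fun u : ℝ => ‖v + u • a‖) t u| ≤ ‖a‖ := by
  rw [slope_def_field, abs_div]
  rcases eq_or_ne u t with rfl | hut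
  · simp
  rw [div_le_iff₀ (abs_pos.mpr (sub_ne_zero.mpr hut))]
  have hdiff : (v + u • a) - (v + t • a) = (u - t) • a := by rw [sub_smul]; abel
  calc |‖v + u • a‖ - ‖v + t • a‖| ≤ ‖(v + u • a) - (v + t • a)‖ := abs_norm_sub_norm_le _ _
    _ = ‖a‖ * |u - t| := by rw [hdiff, norm_smul, Real.norm_eq_abs, mul_comm]

theorem hasDerivWithinAt_norm_add_smul_Ici (v a : E) (t : ℝ) :
    HasDerivWithinAt (fun u : ℝ => ‖v + u • a‖) (normRightDeriv (v + t • a) a) (Ici t) t := by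
  by_cases hvt : v + t • a = 0
  · obtain rfl := eq_neg_of_add_eq_zero_left hvt
    have hline : ∀ u, ‖-(t • a) + u • a‖ = |u - t| * ‖a‖ := fun u => by
      rw [neg_add_eq_sub, ← sub_smul, norm_smul, Real.norm_eq_abs]
    have hlin := ((hasDerivWithinAt_id t (Ici t)).sub_const t).mul_const ‖a‖
    rw [one_mul] at hlin
    rw [normRightDeriv, if_pos hvt]
    refine hlin.congr (fun u hu => ?_) ?_
    · rw [hline, abs_of_nonneg (sub_nonneg.mpr hu), id]
    · simp
  · rw [normRightDeriv_of_ne_zero hvt]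
    exact (hasDerivAt_norm_add_smul v a hvt).hasDerivWithinAt

theorem tendsto_slope_norm_add_smul (v a : E) (t : ℝ) :
    Tendsto (slope (fun u : ℝ => ‖v + u • a‖) t) (𝓝[>] t) (𝓝 (normRightDeriv (v + t • a) a)) :=
  (hasDerivWithinAt_iff_tendsto_slope' (s := Ioi t) (lt_irrefl t)).mp
    (hasDerivWithinAt_Ioi_iff_Ici.mpr (hasDerivWithinAt_norm_add_smul_Ici v a t))

theorem abs_normRightDeriv_add_smul_sub_le {n : E} (hn : ‖n‖ = 1) (a : E) (t : ℝ) :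
    |normRightDeriv (n + t • a) a - ⟪n, a⟫_ℝ| ≤ 2 * |t| * ‖a‖ ^ 2 := by
  set v := n + t • a
  have hvn : ‖v - n‖ = |t| * ‖a‖ := by simp [v, norm_smul]
  have hinner : |⟪n, a⟫_ℝ| ≤ ‖a‖ := by simpa [hn] using abs_real_inner_le_norm n a
  by_cases hv : v = 0
  · have hta : |t| * ‖a‖ = 1 := by rw [← hvn, hv, zero_sub, norm_neg, hn]
    rw [normRightDeriv, if_pos hv]
    calc |‖a‖ - ⟪n, a⟫_ℝ| ≤ ‖a‖ + ‖a‖ := (abs_sub _ _).trans (by rw [abs_norm]; linarith)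
      _ = 2 * |t| * ‖a‖ ^ 2 := by linear_combination (-2 * ‖a‖) * hta
  · have hunit : ‖‖v‖⁻¹ • v - n‖ ≤ 2 * (|t| * ‖a‖) := by
      have hv0 : 0 < ‖v‖ := norm_pos_iff.mpr hv
      calc ‖‖v‖⁻¹ • v - n‖ ≤ ‖‖v‖⁻¹ • v - v‖ + ‖v - n‖ := norm_sub_le_norm_sub_add_norm_sub _ _ _
        _ = |‖v‖ - ‖n‖| + ‖v - n‖ := by
          have hscale : (‖v‖⁻¹ - 1) * ‖v‖ = 1 - ‖v‖ := by field_simp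
          rw [show ‖v‖⁻¹ • v - v = (‖v‖⁻¹ - 1) • v by rw [sub_smul, one_smul], norm_smul,
            Real.norm_eq_abs, hn, abs_sub_comm ‖v‖ 1, ← hscale, abs_mul, abs_norm]
        _ ≤ 2 * (|t| * ‖a‖) := by linarith [abs_norm_sub_norm_le v n]
    rw [normRightDeriv_of_ne_zero hv, div_eq_inv_mul, ← real_inner_smul_left, ← inner_sub_left]
    calc |⟪‖v‖⁻¹ • v - n, a⟫_ℝ| ≤ ‖‖v‖⁻¹ • v - n‖ * ‖a‖ := abs_real_inner_le_norm _ _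
      _ ≤ 2 * (|t| * ‖a‖) * ‖a‖ := by gcongr
      _ = 2 * |t| * ‖a‖ ^ 2 := by ring

theorem tendsto_normRightDeriv_add_smul_slope {n : E} (hn : ‖n‖ = 1) (a : E) :
    Tendsto (fun t : ℝ => (normRightDeriv (n + t • a) a - ⟪n, a⟫_ℝ) / t) (𝓝[≠] 0)
      (𝓝 (‖a‖ ^ 2 - ⟪a, n⟫_ℝ ^ 2)) := by
  have hn0 : n + (0 : ℝ) • a ≠ 0 := by simp [← norm_ne_zero_iff, hn]
  have hline : HasDerivAt (fun t : ℝ => n + t • a) a 0 := by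
    simpa using ((hasDerivAt_id (0 : ℝ)).smul_const a).const_add n
  have hquot : HasDerivAt (fun t : ℝ => ⟪n + t • a, a⟫_ℝ / ‖n + t • a‖)
      (‖a‖ ^ 2 - ⟪a, n⟫_ℝ ^ 2) 0 := by
    refine ((hline.inner ℝ (hasDerivAt_const 0 a)).fun_div (hasDerivAt_norm_add_smul n a hn0)
      (norm_ne_zero_iff.mpr hn0)).congr_deriv ?_
    simp [hn, real_inner_comm a n, sq]
  have hne : ∀ᶠ t : ℝ in 𝓝[≠] 0, n + t • a ≠ 0 :=
    nhdsWithin_le_nhds (hline.continuousAt.eventually_ne hn0)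
  refine ((hasDerivAt_iff_tendsto_slope.mp hquot)).congr' ?_
  filter_upwards [hne] with t ht
  simp [slope_def_field, normRightDeriv_of_ne_zero ht, hn]

end NormAlongLine

section OneSided

theorem hasDerivWithinAt_abs_Ici (t : ℝ) :
    HasDerivWithinAt (|·|) (if 0 ≤ t then 1 else -1) (Ici t) t := by
  split_ifs with ht
  · rcases ht.eq_or_lt with rfl | ht
    · exact (hasDerivWithinAt_id 0 _).congr (fun u hu => abs_of_nonneg hu) abs_zero
    · exact hasDerivWithinAt_abs_pos _ ht
  · exact hasDerivWithinAt_abs_neg _ (not_le.mp ht)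

theorem hasDerivWithinAt_abs_Iic (t : ℝ) :
    HasDerivWithinAt (|·|) (if 0 < t then 1 else -1) (Iic t) t := by
  split_ifs with ht
  · exact hasDerivWithinAt_abs_pos _ ht
  · rcases (not_lt.mp ht).eq_or_lt with rfl | ht
    · exact (hasDerivWithinAt_id 0 _).neg.congr (fun u hu => abs_of_nonpos hu) (by simp)
    · exact hasDerivWithinAt_abs_neg _ ht

theorem tendsto_sub_nhdsGT_nhdsNE (x₀ : ℝ) :
    Tendsto (· - x₀) (𝓝[>] x₀) (𝓝[≠] 0) := by
  have : Tendsto (· - x₀) (𝓝[>] x₀) (𝓝[>] (x₀ - x₀)) := by simp [Tendsto]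
  exact (sub_self x₀ ▸ this).mono_right (nhdsGT_le_nhdsNE 0)

theorem tendsto_sub_nhdsLT_nhdsNE (x₀ : ℝ) :
    Tendsto (· - x₀) (𝓝[<] x₀) (𝓝[≠] 0) := by
  have : Tendsto (· - x₀) (𝓝[<] x₀) (𝓝[<] (x₀ - x₀)) := by simp [Tendsto]
  exact (sub_self x₀ ▸ this).mono_right (nhdsLT_le_nhdsNE 0)

theorem tendsto_slope_oneSidedDeriv_of_eq_add_abs_mul {F h p m Fp Fm : ℝ → ℝ} {x₀ s c L : ℝ}
    (hF : ∀ t, F (x₀ + t) = h t + |t| * s)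
    (hp : ∀ t, HasDerivWithinAt h (p t) (Ici t) t) (hm : ∀ t, HasDerivWithinAt h (m t) (Iic t) t)
    (hFp : ∀ x, HasDerivWithinAt F (Fp x) (Ici x) x)
    (hFm : ∀ x, HasDerivWithinAt F (Fm x) (Iic x) x)
    (hp0 : p 0 = c) (hm0 : m 0 = c)
    (hpL : Tendsto (fun t => (p t - c) / t) (𝓝[≠] 0) (𝓝 L))
    (hmL : Tendsto (fun t => (m t - c) / t) (𝓝[≠] 0) (𝓝 L)) :
    Tendsto (fun x => (Fp x - Fp x₀) / (x - x₀)) (𝓝[>] x₀) (𝓝 L) ∧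
    Tendsto (fun x => (Fm x - Fp x₀) / (x - x₀)) (𝓝[>] x₀) (𝓝 L) ∧
    Tendsto (fun x => (Fp x - Fm x₀) / (x - x₀)) (𝓝[<] x₀) (𝓝 L) ∧
    Tendsto (fun x => (Fm x - Fm x₀) / (x - x₀)) (𝓝[<] x₀) (𝓝 L) := by
  have hG : h + (fun t => |t| * s) = fun t => F (x₀ + t) := funext fun t => (hF t).symm
  have hFp' (t : ℝ) : Fp (x₀ + t) = p t + (if 0 ≤ t then 1 else -1) * s := by
    refine (uniqueDiffWithinAt_Ici t).eq_deriv _ ?_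
      ((hp t).add ((hasDerivWithinAt_abs_Ici t).mul_const s))
    rw [hG]
    have := (hFp (x₀ + t)).scomp t ((hasDerivWithinAt_id t (Ici t)).const_add x₀)
      (fun u hu => by simpa using hu)
    rwa [one_smul] at this
  have hFm' (t : ℝ) : Fm (x₀ + t) = m t + (if 0 < t then 1 else -1) * s := by
    refine (uniqueDiffWithinAt_Iic t).eq_deriv _ ?_
      ((hm t).add ((hasDerivWithinAt_abs_Iic t).mul_const s))
    rw [hG]
    have := (hFm (x₀ + t)).scomp t ((hasDerivWithinAt_id t (Iic t)).const_add x₀)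
      (fun u hu => by simpa using hu)
    rwa [one_smul] at this
  have hFp₀ : Fp x₀ = c + s := by simpa [hp0] using hFp' 0
  have hFm₀ : Fm x₀ = c - s := by simpa [hm0, sub_eq_add_neg] using hFm' 0
  refine ⟨(hpL.comp (tendsto_sub_nhdsGT_nhdsNE x₀)).congr' ?_,
    (hmL.comp (tendsto_sub_nhdsGT_nhdsNE x₀)).congr' ?_,
    (hpL.comp (tendsto_sub_nhdsLT_nhdsNE x₀)).congr' ?_,
    (hmL.comp (tendsto_sub_nhdsLT_nhdsNE x₀)).congr' ?_⟩ <;>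
  filter_upwards [self_mem_nhdsWithin] with x hx <;>
  obtain ⟨t, rfl⟩ : ∃ t, x = x₀ + t := ⟨x - x₀, by ring⟩
  all_goals
    simp only [mem_Ioi, mem_Iio, lt_add_iff_pos_right, add_lt_iff_neg_left] at hx
    simp only [Function.comp_apply, add_sub_cancel_left, hFp', hFm', hFp₀, hFm₀]
    split_ifs <;> first | (exfalso; linarith) | ring

end OneSided

section IntegralAlongLine

variable {X E : Type*} [MeasurableSpace X] [NormedAddCommGroup E] [InnerProductSpace ℝ E]
  {ρ : Measure X} {n a : X → E}

theorem integrable_normRightDeriv_add_smul (hn : AEStronglyMeasurable n ρ) (ha : Integrable a ρ)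
    (t : ℝ) : Integrable (fun x => normRightDeriv (n x + t • a x) (a x)) ρ := by
  -- measurable as the pointwise limit of measurable difference quotients
  have hmeas : AEStronglyMeasurable (fun x => normRightDeriv (n x + t • a x) (a x)) ρ := by
    refine aestronglyMeasurable_of_tendsto_ae (𝓝[>] t)
      (f := fun u x => slope (fun u : ℝ => ‖n x + u • a x‖) t u) (fun u => ?_)
      (ae_of_all _ fun x => ?_)
    · simp only [slope_def_module]
      exact ((hn.add (ha.1.const_smul u)).norm.sub (hn.add (ha.1.const_smul t)).norm).const_smul
        (u - t)⁻¹
    · exact tendsto_slope_norm_add_smul (n x) (a x) t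
  exact ha.norm.mono' hmeas (ae_of_all _ fun x => abs_normRightDeriv_le _ _)

theorem hasDerivWithinAt_integral_norm_add_smul_Ici (hn : Integrable n ρ) (ha : Integrable a ρ)
    (t : ℝ) :
    HasDerivWithinAt (fun u : ℝ => ∫ x, ‖n x + u • a x‖ ∂ρ)
      (∫ x, normRightDeriv (n x + t • a x) (a x) ∂ρ) (Ici t) t := by
  have hint (u : ℝ) : Integrable (fun x => ‖n x + u • a x‖) ρ := (hn.add (ha.smul u)).norm
  have hslope (u : ℝ) : slope (fun u : ℝ => ∫ x, ‖n x + u • a x‖ ∂ρ) t u =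
      ∫ x, slope (fun u : ℝ => ‖n x + u • a x‖) t u ∂ρ := by
    simp only [slope_def_module, integral_smul, integral_sub (hint u) (hint t)]
  rw [← hasDerivWithinAt_Ioi_iff_Ici,
    hasDerivWithinAt_iff_tendsto_slope' (s := Ioi t) (lt_irrefl t),
    funext hslope]
  refine tendsto_integral_filter_of_dominated_convergence (fun x => ‖a x‖)
    (Eventually.of_forall fun u => ?_)
    (Eventually.of_forall fun u => ae_of_all _ fun x => abs_slope_norm_add_smul_le _ _ t u)
    ha.norm (ae_of_all _ fun x => ?_)
  · simp only [slope_def_module]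
    exact (((hint u).sub (hint t)).smul (u - t)⁻¹).aestronglyMeasurable
  · exact tendsto_slope_norm_add_smul (n x) (a x) t

theorem hasDerivWithinAt_integral_norm_add_smul_Iic (hn : Integrable n ρ) (ha : Integrable a ρ)
    (t : ℝ) :
    HasDerivWithinAt (fun u : ℝ => ∫ x, ‖n x + u • a x‖ ∂ρ)
      (∫ x, normLeftDeriv (n x + t • a x) (a x) ∂ρ) (Iic t) t := by
  have := (hasDerivWithinAt_integral_norm_add_smul_Ici hn ha.neg (-t)).scomp t
    (hasDerivWithinAt_neg t (Iic t)) (fun u hu => mem_Ici.mpr (neg_le_neg hu))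
  simpa [Function.comp_def, normLeftDeriv, integral_neg] using this

theorem integral_normRightDeriv_of_norm_eq_one (hn1 : ∀ᵐ x ∂ρ, ‖n x‖ = 1) :
    ∫ x, normRightDeriv (n x) (a x) ∂ρ = ∫ x, ⟪n x, a x⟫_ℝ ∂ρ :=
  integral_congr_ae (hn1.mono fun x hx => normRightDeriv_of_norm_eq_one hx (a x))

theorem integral_normLeftDeriv_of_norm_eq_one (hn1 : ∀ᵐ x ∂ρ, ‖n x‖ = 1) :
    ∫ x, normLeftDeriv (n x) (a x) ∂ρ = ∫ x, ⟪n x, a x⟫_ℝ ∂ρ :=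
  integral_congr_ae (hn1.mono fun x hx => normLeftDeriv_of_norm_eq_one hx (a x))

theorem integral_norm_sq_sub_inner_sq_nonneg (hn1 : ∀ᵐ x ∂ρ, ‖n x‖ = 1) :
    0 ≤ ∫ x, (‖a x‖ ^ 2 - ⟪a x, n x⟫_ℝ ^ 2) ∂ρ := by
  refine integral_nonneg_of_ae (hn1.mono fun x hx => sub_nonneg.mpr ?_)
  simpa [hx] using pow_le_pow_left₀ (abs_nonneg _) (abs_real_inner_le_norm (a x) (n x)) 2

theorem tendsto_integral_normRightDeriv_add_smul_slope (hn1 : ∀ᵐ x ∂ρ, ‖n x‖ = 1)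
    (hn : AEStronglyMeasurable n ρ) (ha : Integrable a ρ)
    (ha2 : Integrable (fun x => ‖a x‖ ^ 2) ρ) :
    Tendsto (fun t : ℝ => (∫ x, normRightDeriv (n x + t • a x) (a x) ∂ρ -
        ∫ x, ⟪n x, a x⟫_ℝ ∂ρ) / t) (𝓝[≠] 0)
      (𝓝 (∫ x, (‖a x‖ ^ 2 - ⟪a x, n x⟫_ℝ ^ 2) ∂ρ)) := by
  have hD := integrable_normRightDeriv_add_smul hn ha
  have hinner : Integrable (fun x => ⟪n x, a x⟫_ℝ) ρ :=
    (hD 0).congr (hn1.mono fun x hx => by simp [normRightDeriv_of_norm_eq_one hx])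
  have hquot (t : ℝ) : (∫ x, normRightDeriv (n x + t • a x) (a x) ∂ρ - ∫ x, ⟪n x, a x⟫_ℝ ∂ρ) / t =
      ∫ x, (normRightDeriv (n x + t • a x) (a x) - ⟪n x, a x⟫_ℝ) / t ∂ρ := by
    rw [integral_div, integral_sub (hD t) hinner]
  rw [funext hquot]
  refine tendsto_integral_filter_of_dominated_convergence (fun x => 2 * ‖a x‖ ^ 2)
    (Eventually.of_forall fun t => (((hD t).sub hinner).div_const t).aestronglyMeasurable) ?_
    (ha2.const_mul 2) (hn1.mono fun x hx => tendsto_normRightDeriv_add_smul_slope hx (a x))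
  filter_upwards [self_mem_nhdsWithin] with t (ht : t ≠ 0)
  filter_upwards [hn1] with x hx
  rw [Real.norm_eq_abs, abs_div, div_le_iff₀ (abs_pos.mpr ht)]
  linarith [abs_normRightDeriv_add_smul_sub_le hx (a x) t]

theorem tendsto_integral_normLeftDeriv_add_smul_slope (hn1 : ∀ᵐ x ∂ρ, ‖n x‖ = 1)
    (hn : AEStronglyMeasurable n ρ) (ha : Integrable a ρ)
    (ha2 : Integrable (fun x => ‖a x‖ ^ 2) ρ) :
    Tendsto (fun t : ℝ => (∫ x, normLeftDeriv (n x + t • a x) (a x) ∂ρ -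
        ∫ x, ⟪n x, a x⟫_ℝ ∂ρ) / t) (𝓝[≠] 0)
      (𝓝 (∫ x, (‖a x‖ ^ 2 - ⟪a x, n x⟫_ℝ ^ 2) ∂ρ)) := by
  have hneg : Tendsto Neg.neg (𝓝[≠] (0 : ℝ)) (𝓝[≠] 0) := by
    have := (Filter.neg_nhdsNE (a := (0 : ℝ))).le
    rwa [neg_zero] at this
  have := (tendsto_integral_normRightDeriv_add_smul_slope hn1 hn ha.neg
    (by simpa using ha2)).comp hneg
  refine Tendsto.congr (fun t => ?_) (by simpa using this)
  simp [normLeftDeriv, integral_neg]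
  ring

end IntegralAlongLine

section TotalVariation

variable {X E : Type*} [MeasurableSpace X] [NormedAddCommGroup E]

theorem integral_norm_eq_toReal_measure_univ {ρ : Measure X} {f : X → E}
    (hf : ∀ᵐ x ∂ρ, ‖f x‖ = 1) : ∫ x, ‖f x‖ ∂ρ = (ρ univ).toReal := by
  simp [integral_congr_ae hf, Measure.real]

theorem integral_norm_rnDeriv_smul [NormedSpace ℝ E] {μ ν : Measure X} [SigmaFinite μ]
    [SigmaFinite ν] (hμν : μ ≪ ν) (f : X → E) :
    ∫ x, ‖(μ.rnDeriv ν x).toReal • f x‖ ∂ν = ∫ x, ‖f x‖ ∂μ := by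
  simp only [norm_smul, Real.norm_of_nonneg ENNReal.toReal_nonneg, ← smul_eq_mul]
  exact integral_rnDeriv_smul hμν

theorem integral_norm_eq_of_forall_setIntegral_eq [NormedSpace ℝ E] [CompleteSpace E]
    {ρ₁ ρ₂ : Measure X} [SigmaFinite ρ₁] [SigmaFinite ρ₂] {f g : X → E}
    (hf : Integrable f ρ₁) (hg : Integrable g ρ₂)
    (heq : ∀ S, MeasurableSet S → ∫ x in S, f x ∂ρ₁ = ∫ x in S, g x ∂ρ₂) :
    ∫ x, ‖f x‖ ∂ρ₁ = ∫ x, ‖g x‖ ∂ρ₂ := by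
  have h₁ : ρ₁ ≪ ρ₁ + ρ₂ := Measure.absolutelyContinuous_of_le (Measure.le_add_right le_rfl)
  have h₂ : ρ₂ ≪ ρ₁ + ρ₂ := Measure.absolutelyContinuous_of_le (Measure.le_add_left le_rfl)
  have hdens : (fun x => (ρ₁.rnDeriv (ρ₁ + ρ₂) x).toReal • f x) =ᵐ[ρ₁ + ρ₂]
      fun x => (ρ₂.rnDeriv (ρ₁ + ρ₂) x).toReal • g x := by
    refine ae_eq_of_forall_setIntegral_eq_of_sigmaFinite
      (fun s _ _ => ((integrable_rnDeriv_smul_iff h₁).mpr hf).integrableOn)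
      (fun s _ _ => ((integrable_rnDeriv_smul_iff h₂).mpr hg).integrableOn) fun s hs _ => ?_
    rw [setIntegral_rnDeriv_smul h₁ hs, setIntegral_rnDeriv_smul h₂ hs, heq s hs]
  rw [← integral_norm_rnDeriv_smul h₁, ← integral_norm_rnDeriv_smul h₂]
  exact integral_congr_ae (hdens.mono fun x hx => congrArg norm hx)

theorem integral_norm_eq_add_of_mutuallySingular [NormedSpace ℝ E] [CompleteSpace E]
    {ρ ρ₁ ρ₂ : Measure X} [SigmaFinite ρ] [SigmaFinite ρ₁] [SigmaFinite ρ₂]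
    {f g₁ g₂ : X → E} (hf : Integrable f ρ) (hg₁ : Integrable g₁ ρ₁) (hg₂ : Integrable g₂ ρ₂)
    (hρ : ρ₁ ⟂ₘ ρ₂)
    (heq : ∀ S, MeasurableSet S →
      ∫ x in S, f x ∂ρ = ∫ x in S, g₁ x ∂ρ₁ + ∫ x in S, g₂ x ∂ρ₂) :
    ∫ x, ‖f x‖ ∂ρ = ∫ x, ‖g₁ x‖ ∂ρ₁ + ∫ x, ‖g₂ x‖ ∂ρ₂ := by
  classical
  set g : X → E := hρ.nullSet.piecewise g₂ g₁
  have hg₁' : g =ᵐ[ρ₁] g₁ := by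
    filter_upwards [measure_eq_zero_iff_ae_notMem.mp hρ.measure_nullSet] with x hx
    exact Set.piecewise_eq_of_notMem _ _ _ hx
  have hg₂' : g =ᵐ[ρ₂] g₂ := by
    filter_upwards [measure_eq_zero_iff_ae_notMem.mp hρ.measure_compl_nullSet] with x hx
    exact Set.piecewise_eq_of_mem _ _ _ (not_not.mp hx)
  have hgi₁ : Integrable g ρ₁ := hg₁.congr hg₁'.symm
  have hgi₂ : Integrable g ρ₂ := hg₂.congr hg₂'.symm
  rw [integral_norm_eq_of_forall_setIntegral_eq hf (integrable_add_measure.mpr ⟨hgi₁, hgi₂⟩)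
      (fun S hS => ?_), integral_add_measure hgi₁.norm hgi₂.norm,
    integral_congr_ae (hg₁'.mono fun x hx => congrArg norm hx),
    integral_congr_ae (hg₂'.mono fun x hx => congrArg norm hx)]
  rw [heq S hS, Measure.restrict_add, integral_add_measure hgi₁.integrableOn hgi₂.integrableOn,
    integral_congr_ae (ae_restrict_of_ae hg₁'), integral_congr_ae (ae_restrict_of_ae hg₂')]

end TotalVariation

theorem second_variation_one_sided_general
    (X : Type*) [MeasurableSpace X] (k : ℕ)
    (μtv : ℝ → Measure X) (N A : ℝ → X → EuclideanSpace ℝ (Fin k))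
    (νtv : Measure X) (Nν : X → EuclideanSpace ℝ (Fin k))
    (νstv : ℝ → Measure X) (Ns : ℝ → X → EuclideanSpace ℝ (Fin k))
    (hμfin : ∀ ε, IsFiniteMeasure (μtv ε))
    (hνsfin : ∀ ε, IsFiniteMeasure (νstv ε))
    (hN1 : ∀ ε, ∀ᵐ x ∂(μtv ε), ‖N ε x‖ = 1)
    (hNs1 : ∀ ε, ∀ᵐ x ∂(νstv ε), ‖Ns ε x‖ = 1)
    (hNint : ∀ ε, Integrable (N ε) (μtv ε))
    (hAint : ∀ ε, Integrable (A ε) (μtv ε))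
    (hNsint : ∀ ε, Integrable (Ns ε) (νstv ε))
    (hsing : ∀ ε, (νstv ε).MutuallySingular (μtv ε))
    (hadd : ∀ ε : ℝ, ∀ S : Set X, MeasurableSet S →
      ∫ x in S, N ε x ∂(μtv ε) = (∫ x in S, N 0 x ∂(μtv 0)) + ε • ∫ x in S, Nν x ∂νtv)
    (hRN : ∀ ε : ℝ, ∀ S : Set X, MeasurableSet S →
      ∫ x in S, Nν x ∂νtv = (∫ x in S, A ε x ∂(μtv ε)) + ∫ x in S, Ns ε x ∂(νstv ε))
    (Fp Fm : ℝ → ℝ)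
    (hFp : ∀ ε : ℝ, HasDerivWithinAt (fun e : ℝ => (μtv e Set.univ).toReal) (Fp ε) (Set.Ici ε) ε)
    (hFm : ∀ ε : ℝ, HasDerivWithinAt (fun e : ℝ => (μtv e Set.univ).toReal) (Fm ε) (Set.Iic ε) ε)
    (ε₁ : ℝ)
    (hA2 : Integrable (fun x => ‖A ε₁ x‖ ^ 2) (μtv ε₁)) :
    Tendsto (fun ε₂ : ℝ => (Fp ε₂ - Fp ε₁) / (ε₂ - ε₁)) (𝓝[>] ε₁)
      (𝓝 (∫ x, (‖A ε₁ x‖ ^ 2 - ⟪A ε₁ x, N ε₁ x⟫_ℝ ^ 2) ∂(μtv ε₁))) ∧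
    Tendsto (fun ε₂ : ℝ => (Fm ε₂ - Fp ε₁) / (ε₂ - ε₁)) (𝓝[>] ε₁)
      (𝓝 (∫ x, (‖A ε₁ x‖ ^ 2 - ⟪A ε₁ x, N ε₁ x⟫_ℝ ^ 2) ∂(μtv ε₁))) ∧
    Tendsto (fun ε₂ : ℝ => (Fp ε₂ - Fm ε₁) / (ε₂ - ε₁)) (𝓝[<] ε₁)
      (𝓝 (∫ x, (‖A ε₁ x‖ ^ 2 - ⟪A ε₁ x, N ε₁ x⟫_ℝ ^ 2) ∂(μtv ε₁))) ∧
    Tendsto (fun ε₂ : ℝ => (Fm ε₂ - Fm ε₁) / (ε₂ - ε₁)) (𝓝[<] ε₁)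
      (𝓝 (∫ x, (‖A ε₁ x‖ ^ 2 - ⟪A ε₁ x, N ε₁ x⟫_ℝ ^ 2) ∂(μtv ε₁))) ∧
    0 ≤ ∫ x, (‖A ε₁ x‖ ^ 2 - ⟪A ε₁ x, N ε₁ x⟫_ℝ ^ 2) ∂(μtv ε₁) := by
  have := hμfin ε₁
  have := hνsfin ε₁
  have hsplit (t : ℝ) (S : Set X) (hS : MeasurableSet S) :
      ∫ x in S, N (ε₁ + t) x ∂μtv (ε₁ + t) =
        ∫ x in S, (N ε₁ x + t • A ε₁ x) ∂μtv ε₁ + ∫ x in S, t • Ns ε₁ x ∂νstv ε₁ := by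
    rw [integral_add (g := fun x => t • A ε₁ x) (hNint ε₁).integrableOn
      ((hAint ε₁).smul t).integrableOn, integral_smul,
      integral_smul, hadd _ S hS, hadd ε₁ S hS, hRN ε₁ S hS]
    module
  have hmass (t : ℝ) : (μtv (ε₁ + t) univ).toReal =
      ∫ x, ‖N ε₁ x + t • A ε₁ x‖ ∂μtv ε₁ + |t| * (νstv ε₁ univ).toReal := by
    have := hμfin (ε₁ + t)
    rw [← integral_norm_eq_toReal_measure_univ (hN1 _),
      ← integral_norm_eq_toReal_measure_univ (hNs1 ε₁),
      integral_norm_eq_add_of_mutuallySingular (hNint _) ((hNint ε₁).add ((hAint ε₁).smul t))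
        ((hNsint ε₁).smul t) (hsing ε₁).symm (hsplit t)]
    simp only [Pi.add_apply, Pi.smul_apply, norm_smul, Real.norm_eq_abs, integral_const_mul]
  obtain ⟨h₁, h₂, h₃, h₄⟩ := tendsto_slope_oneSidedDeriv_of_eq_add_abs_mul hmass
    (hasDerivWithinAt_integral_norm_add_smul_Ici (hNint ε₁) (hAint ε₁))
    (hasDerivWithinAt_integral_norm_add_smul_Iic (hNint ε₁) (hAint ε₁)) hFp hFm
    (by simpa using integral_normRightDeriv_of_norm_eq_one (hN1 ε₁))
    (by simpa using integral_normLeftDeriv_of_norm_eq_one (hN1 ε₁))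
    (tendsto_integral_normRightDeriv_add_smul_slope (hN1 ε₁) (hNint ε₁).1 (hAint ε₁) hA2)
    (tendsto_integral_normLeftDeriv_add_smul_slope (hN1 ε₁) (hNint ε₁).1 (hAint ε₁) hA2)
  exact ⟨h₁, h₂, h₃, h₄, integral_norm_sq_sub_inner_sq_nonneg (hN1 ε₁)⟩

/-- **Second variation via one-sided derivatives at an arbitrary value (Theorem C (2)).**
Setup as in Theorem B.  `Fp ε = F'(ε+)` and `Fm ε = F'(ε−)` denote the one-sided
derivatives of `F(ε) = ∫_X |dμ_ε|`.  If `|A_{ε₁}|² ∈ L¹(|dμ_{ε₁}|)`, then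
`(F'_±(ε₂) − F'_+(ε₁))/(ε₂ − ε₁) → ∫_X (|A_{ε₁}|² − |A_{ε₁}·N_{ε₁}|²)|dμ_{ε₁}|` as
`ε₂ → ε₁+`, and `(F'_±(ε₂) − F'_−(ε₁))/(ε₂ − ε₁)` tends to the same (nonnegative)
value as `ε₂ → ε₁−`. -/
theorem second_variation_one_sided
    (X : Type*) [MeasurableSpace X] (k : ℕ)
    (μtv : ℝ → Measure X) (N A : ℝ → X → EuclideanSpace ℝ (Fin k))
    (νtv : Measure X) (Nν : X → EuclideanSpace ℝ (Fin k))
    (νstv : ℝ → Measure X) (Ns : ℝ → X → EuclideanSpace ℝ (Fin k))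
    (hμfin : ∀ ε, IsFiniteMeasure (μtv ε))
    (hνfin : IsFiniteMeasure νtv)
    (hνsfin : ∀ ε, IsFiniteMeasure (νstv ε))
    (hN1 : ∀ ε, ∀ᵐ x ∂(μtv ε), ‖N ε x‖ = 1)
    (hNν1 : ∀ᵐ x ∂νtv, ‖Nν x‖ = 1)
    (hNs1 : ∀ ε, ∀ᵐ x ∂(νstv ε), ‖Ns ε x‖ = 1)
    (hNint : ∀ ε, Integrable (N ε) (μtv ε))
    (hAint : ∀ ε, Integrable (A ε) (μtv ε))
    (hNνint : Integrable Nν νtv)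
    (hNsint : ∀ ε, Integrable (Ns ε) (νstv ε))
    (hsing : ∀ ε, (νstv ε).MutuallySingular (μtv ε))
    (hadd : ∀ ε : ℝ, ∀ S : Set X, MeasurableSet S →
      ∫ x in S, N ε x ∂(μtv ε) = (∫ x in S, N 0 x ∂(μtv 0)) + ε • ∫ x in S, Nν x ∂νtv)
    (hRN : ∀ ε : ℝ, ∀ S : Set X, MeasurableSet S →
      ∫ x in S, Nν x ∂νtv = (∫ x in S, A ε x ∂(μtv ε)) + ∫ x in S, Ns ε x ∂(νstv ε))
    (Fp Fm : ℝ → ℝ)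
    (hFp : ∀ ε : ℝ, HasDerivWithinAt (fun e : ℝ => (μtv e Set.univ).toReal) (Fp ε) (Set.Ici ε) ε)
    (hFm : ∀ ε : ℝ, HasDerivWithinAt (fun e : ℝ => (μtv e Set.univ).toReal) (Fm ε) (Set.Iic ε) ε)
    (ε₁ : ℝ)
    (hA2 : Integrable (fun x => ‖A ε₁ x‖ ^ 2) (μtv ε₁)) :
    Tendsto (fun ε₂ : ℝ => (Fp ε₂ - Fp ε₁) / (ε₂ - ε₁)) (𝓝[>] ε₁)
      (𝓝 (∫ x, (‖A ε₁ x‖ ^ 2 - ⟪A ε₁ x, N ε₁ x⟫_ℝ ^ 2) ∂(μtv ε₁))) ∧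
    Tendsto (fun ε₂ : ℝ => (Fm ε₂ - Fp ε₁) / (ε₂ - ε₁)) (𝓝[>] ε₁)
      (𝓝 (∫ x, (‖A ε₁ x‖ ^ 2 - ⟪A ε₁ x, N ε₁ x⟫_ℝ ^ 2) ∂(μtv ε₁))) ∧
    Tendsto (fun ε₂ : ℝ => (Fp ε₂ - Fm ε₁) / (ε₂ - ε₁)) (𝓝[<] ε₁)
      (𝓝 (∫ x, (‖A ε₁ x‖ ^ 2 - ⟪A ε₁ x, N ε₁ x⟫_ℝ ^ 2) ∂(μtv ε₁))) ∧
    Tendsto (fun ε₂ : ℝ => (Fm ε₂ - Fm ε₁) / (ε₂ - ε₁)) (𝓝[<] ε₁)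
      (𝓝 (∫ x, (‖A ε₁ x‖ ^ 2 - ⟪A ε₁ x, N ε₁ x⟫_ℝ ^ 2) ∂(μtv ε₁))) ∧
    0 ≤ ∫ x, (‖A ε₁ x‖ ^ 2 - ⟪A ε₁ x, N ε₁ x⟫_ℝ ^ 2) ∂(μtv ε₁) :=
  second_variation_one_sided_general X k μtv N A νtv Nν νstv Ns hμfin hνsfin hN1 hNs1 hNint hAint
    hNsint hsing hadd hRN Fp Fm hFp hFm ε₁ hA2
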